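/- arXiv:2304.05092 — 4 statements merged into one kernel-verified Lean document; each statement's English description precedes it below -/
import Mathlib

section
/- Let H : ℝ² → ℝ satisfy: (C3) H is of class C³; (CNH) there exists X > 0 such that ∂ₓH(x,p) = 0 whenever |x| ≥ X; (CVX) for every x ∈ ℝ the map p ↦ ∂ₚH(x,p) is an increasing C¹-diffeomorphism of ℝ onto itself. Then H satisfies: (UC, uniform coercivity) for every h ∈ ℝ there exists U_h ∈ ℝ such that for all (x,u) ∈ ℝ², |H(x,u)| ≤ h implies |u| ≤ U_h; and (WGNL, weak genuine nonlinearity) for almost every x ∈ ℝ the set {w ∈ ℝ : ∂²H/∂w²(x,w) = 0} has empty interior. -/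
open Real Set MeasureTheory Filter Topology

noncomputable section

/-- Partial derivative of `H` in its first (space) variable. -/
def pdx (H : ℝ → ℝ → ℝ) (x p : ℝ) : ℝ := deriv (fun y => H y p) x

/-- Partial derivative of `H` in its second (momentum) variable. -/
def pdp (H : ℝ → ℝ → ℝ) (x p : ℝ) : ℝ := deriv (fun u => H x u) p

/-- (C3) Smoothness: `H ∈ C³(ℝ²; ℝ)`. -/
def CondC3 (H : ℝ → ℝ → ℝ) : Prop := ContDiff ℝ 3 (Function.uncurry H)

/-- (CNH) Compact non-homogeneity: `∂ₓ H (x,p) = 0` for `|x| ≥ X`. -/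
def CondCNH (H : ℝ → ℝ → ℝ) : Prop := ∃ X > (0:ℝ), ∀ x p : ℝ, X ≤ |x| → pdx H x p = 0

/-- (CVX) Strong convexity: for every `x`, `p ↦ ∂ₚ H (x,p)` is an increasing
`C¹`-diffeomorphism of `ℝ` onto itself. -/
def CondCVX (H : ℝ → ℝ → ℝ) : Prop :=
  ∀ x : ℝ, StrictMono (pdp H x) ∧ Function.Bijective (pdp H x) ∧
    ContDiff ℝ 1 (pdp H x) ∧ ContDiff ℝ 1 (Function.invFun (pdp H x))

/-! (UC): by (CNH), `H x = H x'` for the projection `x'` of `x` onto `[-X, X]`, so it suffices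
to bound `u` uniformly for `x` in a compact interval. For a fixed `x`, `u ↦ H x u` is convex
with derivative onto `ℝ`, so there is an `r` with `H x (±r) > h` and `H x` increasing in `|u|`
at `±r`; these are finitely many strict inequalities, so they persist for `y` near `x`, and
by convexity they give `H y u > h` for all `|u| ≥ r`. Compactness makes `r` uniform.

(WGNL) holds for every `x`: a strictly increasing differentiable function cannot have zero
derivative on an open interval. -/

theorem Convex.apply_eq_of_deriv_eq_zero {f : ℝ → ℝ} {s : Set ℝ} (hs : Convex ℝ s)
    (hf : Differentiable ℝ f) (h0 : ∀ y ∈ s, deriv f y = 0) {x y : ℝ} (hx : x ∈ s)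
    (hy : y ∈ s) : f x = f y := by
  have := hs.norm_image_sub_le_of_norm_deriv_le (fun z _ => hf z) (C := 0)
    (fun z hz => by rw [h0 z hz, norm_zero]) hy hx
  rw [zero_mul, norm_le_zero_iff, sub_eq_zero] at this
  exact this

theorem apply_eq_apply_max_min_of_deriv_eq_zero {f : ℝ → ℝ} (hf : Differentiable ℝ f)
    {X : ℝ} (hX : 0 ≤ X) (h0 : ∀ y, X ≤ |y| → deriv f y = 0) (x : ℝ) :
    f x = f (max (-X) (min X x)) := by
  rcases le_total x (-X) with hx | hx
  · rw [min_eq_right (by linarith), max_eq_left hx]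
    exact (convex_Iic (-X)).apply_eq_of_deriv_eq_zero hf
      (fun y hy => h0 y (by rw [mem_Iic] at hy; linarith [neg_le_abs y])) hx
      (mem_Iic.2 le_rfl)
  rcases le_total X x with hx' | hx'
  · rw [min_eq_left hx', max_eq_right (by linarith)]
    exact (convex_Ici X).apply_eq_of_deriv_eq_zero hf
      (fun y hy => h0 y (le_trans hy (le_abs_self y))) hx' (mem_Ici.2 le_rfl)
  · rw [min_eq_right hx', max_eq_right hx]

theorem eventually_lt_and_apply_sub_one_lt {φ : ℝ → ℝ} (hφ : Differentiable ℝ φ) {q : ℝ}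
    (hq : ∀ u, q ≤ u → 1 ≤ deriv φ u) (h : ℝ) :
    ∀ᶠ r in atTop, h < φ r ∧ φ (r - 1) < φ r := by
  have growth : ∀ a b, q ≤ a → a ≤ b → b - a ≤ φ b - φ a := by
    intro a b ha hab
    have := (convex_Ici q).mul_sub_le_image_sub_of_le_deriv hφ.continuous.continuousOn
      hφ.differentiableOn (C := 1) (fun u hu => hq u (interior_subset hu))
      a ha b (ha.trans hab) hab
    linarith
  filter_upwards [eventually_ge_atTop (q + 1), eventually_gt_atTop (h - φ q + q)]
    with r h1 h2
  exact ⟨by linarith [growth q r le_rfl (by linarith)],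
    by linarith [growth (r - 1) r (by linarith) (by linarith)]⟩

theorem eventually_lt_and_apply_sub_one_lt_of_surjective_deriv {φ : ℝ → ℝ}
    (hφ : Differentiable ℝ φ) (hmono : Monotone (deriv φ))
    (hsurj : Function.Surjective (deriv φ)) (h : ℝ) :
    ∀ᶠ r in atTop, (h < φ r ∧ φ (r - 1) < φ r) ∧ (h < φ (-r) ∧ φ (-(r - 1)) < φ (-r)) := by
  obtain ⟨q, hq⟩ := hsurj 1
  obtain ⟨p, hp⟩ := hsurj (-1)
  refine (eventually_lt_and_apply_sub_one_lt hφ (fun u hu => hq ▸ hmono hu) h).and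
    (eventually_lt_and_apply_sub_one_lt (φ := fun u => φ (-u)) (hφ.comp differentiable_neg)
      (q := -p) (fun u hu => ?_) h)
  rw [deriv_comp_neg]
  linarith [hmono (show -u ≤ p by linarith)]

theorem ConvexOn.lt_apply_of_le_abs {φ : ℝ → ℝ} (hφ : ConvexOn ℝ univ φ) {h r u : ℝ}
    (hr : h < φ r ∧ φ (r - 1) ≤ φ r) (hr' : h < φ (-r) ∧ φ (-(r - 1)) ≤ φ (-r))
    (hu : r ≤ |u|) : h < φ u := by
  rcases le_abs'.1 hu with hu | hu
  · exact hr'.1.trans_le (hφ.le_left_of_right_le'' trivial trivial hu (by linarith) hr'.2)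
  · exact hr.1.trans_le (hφ.le_right_of_left_le'' trivial trivial (by linarith) hu hr.2)

theorem IsCompact.exists_forall_of_eventually {α ι : Type*} [TopologicalSpace α] [Preorder ι]
    [IsDirected ι (· ≤ ·)] [Nonempty ι] {K : Set α} (hK : IsCompact K) {P : ι → α → Prop}
    (hP : ∀ x, Monotone (P · x)) (hloc : ∀ x ∈ K, ∃ i, ∀ᶠ y in 𝓝 x, P i y) :
    ∃ i, ∀ x ∈ K, P i x := by
  obtain ⟨i, hi⟩ := hK.elim_directed_cover (fun i => interior {y | P i y})
    (fun _ => isOpen_interior)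
    (fun x hx => by
      obtain ⟨i, hi⟩ := hloc x hx
      exact mem_iUnion.2 ⟨i, mem_interior_iff_mem_nhds.2 hi⟩)
    (Monotone.directed_le fun i j hij => interior_mono fun y => hP y hij)
  exact ⟨i, fun x hx => interior_subset (hi hx)⟩

theorem StrictMono.interior_setOf_deriv_eq_zero {f : ℝ → ℝ} (hf : StrictMono f)
    (hd : Differentiable ℝ f) : interior {w | deriv f w = 0} = ∅ := by
  refine eq_empty_iff_forall_notMem.2 fun w hw => ?_
  obtain ⟨r, hr, hball⟩ := Metric.mem_nhds_iff.1 (mem_interior_iff_mem_nhds.1 hw)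
  have hconst : f w = f (w + r / 2) :=
    Metric.isOpen_ball.is_const_of_deriv_eq_zero (convex_ball w r).isPreconnected
      hd.differentiableOn hball (Metric.mem_ball_self hr)
      (by rw [Metric.mem_ball, Real.dist_eq, add_sub_cancel_left, abs_of_pos (by linarith)]
          linarith)
  exact (hf (show w < w + r / 2 by linarith)).ne hconst

section Hamiltonian

variable {H : ℝ → ℝ → ℝ}

theorem CondC3.continuous_left (hC3 : CondC3 H) (u : ℝ) : Continuous (fun x => H x u) :=
  hC3.continuous.comp (continuous_id.prodMk continuous_const)

theorem CondC3.differentiable_left (hC3 : CondC3 H) (u : ℝ) :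
    Differentiable ℝ (fun x => H x u) :=
  (hC3.comp (contDiff_id.prodMk contDiff_const)).differentiable (by norm_num)

theorem CondC3.differentiable_right (hC3 : CondC3 H) (x : ℝ) :
    Differentiable ℝ (fun u => H x u) :=
  (hC3.comp (contDiff_const.prodMk contDiff_id)).differentiable (by norm_num)

theorem CondCNH.exists_forall_apply_eq (hC3 : CondC3 H) (hCNH : CondCNH H) :
    ∃ X, ∀ x, ∃ x' ∈ Icc (-X) X, ∀ u, H x u = H x' u := by
  obtain ⟨X, hX, hzero⟩ := hCNH
  refine ⟨X, fun x => ⟨max (-X) (min X x), ⟨le_max_left _ _, max_le (by linarith)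
    (min_le_left _ _)⟩, fun u => ?_⟩⟩
  exact apply_eq_apply_max_min_of_deriv_eq_zero (hC3.differentiable_left u) hX.le
    (fun y hy => hzero y u hy) x

theorem CondCVX.convexOn (hC3 : CondC3 H) (hCVX : CondCVX H) (x : ℝ) :
    ConvexOn ℝ univ (fun u => H x u) :=
  Monotone.convexOn_univ_of_deriv (hC3.differentiable_right x) (hCVX x).1.monotone

theorem CondCVX.exists_eventually_lt (hC3 : CondC3 H) (hCVX : CondCVX H) (h x : ℝ) :
    ∃ r, ∀ᶠ y in 𝓝 x, ∀ u, r ≤ |u| → h < H y u := by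
  obtain ⟨r, ⟨hr, hr1⟩, ⟨hr', hr1'⟩⟩ := (eventually_lt_and_apply_sub_one_lt_of_surjective_deriv
    (hC3.differentiable_right x) (hCVX x).1.monotone (hCVX x).2.1.2 h).exists
  have hc := hC3.continuous_left
  refine ⟨r, ?_⟩
  filter_upwards [continuousAt_const.eventually_lt (hc r).continuousAt hr,
    (hc (r - 1)).continuousAt.eventually_lt (hc r).continuousAt hr1,
    continuousAt_const.eventually_lt (hc (-r)).continuousAt hr',
    (hc (-(r - 1))).continuousAt.eventually_lt (hc (-r)).continuousAt hr1']
    with y h1 h2 h3 h4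
  exact fun u hu => (hCVX.convexOn hC3 y).lt_apply_of_le_abs ⟨h1, h2.le⟩ ⟨h3, h4.le⟩ hu

theorem uniformly_coercive (hC3 : CondC3 H) (hCNH : CondCNH H) (hCVX : CondCVX H) (h : ℝ) :
    ∃ Uh : ℝ, ∀ x u : ℝ, |H x u| ≤ h → |u| ≤ Uh := by
  obtain ⟨X, hX⟩ := hCNH.exists_forall_apply_eq hC3
  obtain ⟨r, hr⟩ := isCompact_Icc.exists_forall_of_eventually
    (P := fun r y => ∀ u, r ≤ |u| → h < H y u)
    (fun y r r' hrr' hy u hu => hy u (hrr'.trans hu))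
    (fun x _ => hCVX.exists_eventually_lt hC3 h x)
  refine ⟨r, fun x u hxu => le_of_not_gt fun hu => ?_⟩
  obtain ⟨x', hx', hxx'⟩ := hX x
  have := hr x' hx' u hu.le
  rw [← hxx'] at this
  linarith [le_abs_self (H x u)]

end Hamiltonian

/-- Proposition 2.6: (C3), (CNH), (CVX) imply uniform coercivity (UC) and
weak genuine nonlinearity (WGNL). -/
theorem stmt_0 (H : ℝ → ℝ → ℝ) (hC3 : CondC3 H) (hCNH : CondCNH H) (hCVX : CondCVX H) :
    (∀ h : ℝ, ∃ Uh : ℝ, ∀ x u : ℝ, |H x u| ≤ h → |u| ≤ Uh) ∧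
    (∀ᵐ x ∂(volume : Measure ℝ),
      interior {w : ℝ | deriv (pdp H x) w = 0} = (∅ : Set ℝ)) :=
  ⟨uniformly_coercive hC3 hCNH hCVX, ae_of_all _ fun x =>
    (hCVX x).1.interior_setOf_deriv_eq_zero ((hCVX x).2.2.1.differentiable one_ne_zero)⟩
end
end

section
/- Let H satisfy (C3), (CNH) and (CVX). Then there exists a unique function z : ℝ → ℝ such that ∂ₚH(x, z(x)) = 0 for all x ∈ ℝ. Moreover z is of class C², z′(x) = 0 whenever |x| ≥ X, and consequently z attains a minimum and a maximum over ℝ, and the map x ↦ H(x, z(x)) attains a maximum K over ℝ. -/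
/-! Since `∂ₚH(x, ·)` is a bijection, `z(x)` is its unique zero. The map `∂ₚH` is `C²` and its
`p`-derivative never vanishes, because `∂ₚH(x, ·)` has a differentiable inverse; so the implicit
function theorem makes `z` a `C²` function. By (CNH), `H(x, ·) = H(π x, ·)` where `π` is the
projection of `ℝ` onto `[-X, X]`. Hence `z` and `x ↦ H(x, z(x))` factor through `π`: they are
constant beyond `±X` and attain their extrema on the compact interval `[-X, X]`. -/

open Real Set MeasureTheory Filter Topology

noncomputable section

open Function

section Calculus

variable {𝕜 : Type*} [NontriviallyNormedField 𝕜]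
  {E : Type*} [NormedAddCommGroup E] [NormedSpace 𝕜 E]
  {F : Type*} [NormedAddCommGroup F] [NormedSpace 𝕜 F]

theorem ContinuousLinearMap.isInvertible_of_apply_one_ne_zero {L : 𝕜 →L[𝕜] 𝕜} (h : L 1 ≠ 0) :
    L.IsInvertible :=
  ⟨ContinuousLinearEquiv.unitsEquivAut 𝕜 (Units.mk0 _ h), by
    ext; simp [ContinuousLinearEquiv.unitsEquivAut_apply]⟩

theorem DifferentiableAt.deriv_comp_prodMk_right {f : E × 𝕜 → F} {x : E} {p : 𝕜}
    (hf : DifferentiableAt 𝕜 f (x, p)) :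
    deriv (fun y => f (x, y)) p = fderiv 𝕜 f (x, p) (0, 1) :=
  (hf.hasFDerivAt.comp_hasDerivAt p ((hasDerivAt_const p x).prodMk (hasDerivAt_id p))).deriv

theorem deriv_ne_zero_of_leftInverse {f g : 𝕜 → 𝕜} {x : 𝕜} (hgf : LeftInverse g f)
    (hf : DifferentiableAt 𝕜 f x) (hg : DifferentiableAt 𝕜 g (f x)) : deriv f x ≠ 0 := by
  have hcomp : HasDerivAt (g ∘ f) (deriv g (f x) * deriv f x) x :=
    hg.hasDerivAt.comp x hf.hasDerivAt
  rw [hgf.comp_eq_id] at hcomp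
  exact right_ne_zero_of_mul_eq_one (hcomp.unique (hasDerivAt_id x))

theorem deriv_eq_zero_of_eqOn_const {f : 𝕜 → F} {s : Set 𝕜} {x : 𝕜} {c : F}
    (hs : UniqueDiffWithinAt 𝕜 s x) (hx : x ∈ s) (hf : EqOn f (fun _ => c) s) :
    deriv f x = 0 := by
  by_cases hfx : DifferentiableAt 𝕜 f x
  · exact hs.eq_deriv s hfx.hasDerivAt.hasDerivWithinAt
      ((hasDerivWithinAt_const x s c).congr hf (hf hx))
  · exact deriv_zero_of_not_differentiableAt hfx

end Calculus

theorem ContDiffAt.of_forall_apply_eq_of_injective {𝕜 : Type*} [RCLike 𝕜]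
    {E₁ : Type*} [NormedAddCommGroup E₁] [NormedSpace 𝕜 E₁] [CompleteSpace E₁]
    {E₂ : Type*} [NormedAddCommGroup E₂] [NormedSpace 𝕜 E₂] [CompleteSpace E₂]
    {F : Type*} [NormedAddCommGroup F] [NormedSpace 𝕜 F] [CompleteSpace F]
    {f : E₁ × E₂ → F} {φ : E₁ → E₂} {x₀ : E₁} {c : F} {n : WithTop ℕ∞}
    (hf : ContDiffAt 𝕜 n f (x₀, φ x₀)) (hn : n ≠ 0)
    (hf₂ : (fderiv 𝕜 f (x₀, φ x₀) ∘L .inr 𝕜 E₁ E₂).IsInvertible)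
    (hinj : ∀ x, Injective fun y => f (x, y)) (hφ : ∀ x, f (x, φ x) = c) :
    ContDiffAt 𝕜 n φ x₀ := by
  refine (hf.contDiffAt_implicitFunction hn hf₂).congr_of_eventuallyEq ?_
  filter_upwards [hf.eventually_apply_implicitFunction hn hf₂] with x hx
  exact hinj x (show f (x, _) = f (x, _) by rw [hx, hφ, hφ])

section ProjIcc

variable {E : Type*} [NormedAddCommGroup E] [NormedSpace ℝ E] {f : ℝ → E} {a b : ℝ}

theorem Convex.is_const_of_deriv_eq_zero {s : Set ℝ} (hs : Convex ℝ s)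
    (hf : ∀ x ∈ s, DifferentiableAt ℝ f x) (hf' : ∀ x ∈ s, deriv f x = 0) {x y : ℝ}
    (hx : x ∈ s) (hy : y ∈ s) : f x = f y := by
  have hle := hs.norm_image_sub_le_of_norm_deriv_le hf
    (fun t ht => by rw [hf' t ht, norm_zero]) hx hy
  rwa [zero_mul, norm_le_zero_iff, sub_eq_zero, eq_comm] at hle

theorem apply_projIcc_of_deriv_eq_zero (hab : a ≤ b) (hf : Differentiable ℝ f)
    (hf' : ∀ x ∉ Ioo a b, deriv f x = 0) (x : ℝ) : f (projIcc a b hab x) = f x := by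
  rcases le_total x a with hxa | hax
  · rw [projIcc_of_le_left hab hxa]
    exact (convex_Iic a).is_const_of_deriv_eq_zero (fun t _ => hf t)
      (fun t ht => hf' t fun h => not_lt.2 ht h.1) self_mem_Iic hxa
  rcases le_total b x with hbx | hxb
  · rw [projIcc_of_right_le hab hbx]
    exact (convex_Ici b).is_const_of_deriv_eq_zero (fun t _ => hf t)
      (fun t ht => hf' t fun h => not_lt.2 ht h.2) self_mem_Ici hbx
  · rw [projIcc_of_mem hab ⟨hax, hxb⟩]

theorem deriv_eq_zero_of_apply_projIcc (hab : a ≤ b) (hf : ∀ x, f (projIcc a b hab x) = f x)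
    {x : ℝ} (hx : x ∉ Ioo a b) : deriv f x = 0 := by
  rcases not_and_or.1 hx with hxa | hbx
  · refine deriv_eq_zero_of_eqOn_const (c := f a) (uniqueDiffWithinAt_Iic x) self_mem_Iic
      fun y hy => ?_
    rw [← hf y, projIcc_of_le_left hab (hy.trans (not_lt.1 hxa))]
  · refine deriv_eq_zero_of_eqOn_const (c := f b) (uniqueDiffWithinAt_Ici x) self_mem_Ici
      fun y hy => ?_
    rw [← hf y, projIcc_of_right_le hab ((not_lt.1 hbx).trans hy)]

end ProjIcc

section Extrema

variable {α : Type*} [LinearOrder α] [TopologicalSpace α] [OrderClosedTopology α]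
  {f : ℝ → α} {a b : ℝ}

theorem exists_forall_ge_of_apply_projIcc (hab : a ≤ b) (hf : Continuous f)
    (hproj : ∀ x, f (projIcc a b hab x) = f x) : ∃ c, ∀ x, f x ≤ f c := by
  obtain ⟨c, -, hc⟩ := isCompact_Icc.exists_isMaxOn (nonempty_Icc.2 hab) hf.continuousOn
  exact ⟨c, fun x => hproj x ▸ hc (projIcc a b hab x).2⟩

theorem exists_forall_le_of_apply_projIcc (hab : a ≤ b) (hf : Continuous f)
    (hproj : ∀ x, f (projIcc a b hab x) = f x) : ∃ c, ∀ x, f c ≤ f x := by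
  obtain ⟨c, -, hc⟩ := isCompact_Icc.exists_isMinOn (nonempty_Icc.2 hab) hf.continuousOn
  exact ⟨c, fun x => hproj x ▸ hc (projIcc a b hab x).2⟩

end Extrema

theorem le_abs_iff_notMem_Ioo {α : Type*} [AddCommGroup α] [LinearOrder α] [IsOrderedAddMonoid α]
    {a x : α} : a ≤ |x| ↔ x ∉ Ioo (-a) a := by
  rw [mem_Ioo, ← abs_lt, not_lt]

section Hamiltonian

variable {H : ℝ → ℝ → ℝ}

theorem pdp_eq_fderiv (hH : Differentiable ℝ (uncurry H)) (x p : ℝ) :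
    pdp H x p = fderiv ℝ (uncurry H) (x, p) (0, 1) :=
  (hH (x, p)).deriv_comp_prodMk_right

theorem contDiff_uncurry_pdp {n : WithTop ℕ∞} (hH : ContDiff ℝ (n + 1) (uncurry H)) :
    ContDiff ℝ n (uncurry (pdp H)) := by
  have hpdp : uncurry (pdp H) = fun q => fderiv ℝ (uncurry H) q (0, 1) :=
    funext fun q => pdp_eq_fderiv (hH.differentiable (by simp)) q.1 q.2
  rw [hpdp]
  exact (hH.fderiv_right le_rfl).clm_apply contDiff_const

theorem deriv_pdp_ne_zero (hCVX : CondCVX H) (x p : ℝ) : deriv (pdp H x) p ≠ 0 :=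
  deriv_ne_zero_of_leftInverse (leftInverse_invFun (hCVX x).2.1.1)
    ((hCVX x).2.2.1.differentiable one_ne_zero p) ((hCVX x).2.2.2.differentiable one_ne_zero _)

theorem contDiff_of_pdp_eq_zero (hC3 : CondC3 H) (hCVX : CondCVX H) {z : ℝ → ℝ}
    (hz : ∀ x, pdp H x (z x) = 0) : ContDiff ℝ 2 z := by
  have hF : ContDiff ℝ 2 (uncurry (pdp H)) := contDiff_uncurry_pdp hC3
  refine contDiff_iff_contDiffAt.2 fun x₀ => hF.contDiffAt.of_forall_apply_eq_of_injective
    two_ne_zero (ContinuousLinearMap.isInvertible_of_apply_one_ne_zero ?_)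
    (fun x => (hCVX x).2.1.1) hz
  have hpartial := (hF.differentiable two_ne_zero (x₀, z x₀)).deriv_comp_prodMk_right
  simpa [← hpartial] using deriv_pdp_ne_zero hCVX x₀ (z x₀)

theorem apply_projIcc_eq_of_pdx_eq_zero (hC3 : CondC3 H) {X : ℝ} (hX : -X ≤ X)
    (hCNH : ∀ x p : ℝ, X ≤ |x| → pdx H x p = 0) (x : ℝ) : H (projIcc (-X) X hX x) = H x := by
  funext p
  have hslice : Differentiable ℝ fun y => H y p :=
    (hC3.comp (contDiff_id.prodMk contDiff_const)).differentiable (by norm_num)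
  exact apply_projIcc_of_deriv_eq_zero hX hslice
    (fun y hy => hCNH y p (le_abs_iff_notMem_Ioo.2 hy)) x

end Hamiltonian

/-- Lemma: there is a unique `z : ℝ → ℝ` with `∂ₚH(x, z(x)) = 0`; it is `C²`, has
vanishing derivative for `|x| ≥ X`, attains a minimum and a maximum, and
`x ↦ H(x, z(x))` attains a maximum. -/
theorem stmt_2 (H : ℝ → ℝ → ℝ) (hC3 : CondC3 H) (X : ℝ) (hX : 0 < X)
    (hCNH : ∀ x p : ℝ, X ≤ |x| → pdx H x p = 0) (hCVX : CondCVX H) :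
    (∃! z : ℝ → ℝ, ∀ x : ℝ, pdp H x (z x) = 0) ∧
    ∀ z : ℝ → ℝ, (∀ x : ℝ, pdp H x (z x) = 0) →
      ContDiff ℝ 2 z ∧ (∀ x : ℝ, X ≤ |x| → deriv z x = 0) ∧
      (∃ a : ℝ, ∀ x : ℝ, z a ≤ z x) ∧ (∃ b : ℝ, ∀ x : ℝ, z x ≤ z b) ∧
      (∃ c : ℝ, ∀ x : ℝ, H x (z x) ≤ H c (z c)) := by
  have hinj x : Injective (pdp H x) := (hCVX x).2.1.1
  have hsurj x : Surjective (pdp H x) := (hCVX x).2.1.2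
  refine ⟨⟨fun x => invFun (pdp H x) 0, fun x => invFun_eq (hsurj x 0),
    fun w hw => funext fun x => hinj x ((hw x).trans (invFun_eq (hsurj x 0)).symm)⟩, ?_⟩
  intro z hz
  have hXX : -X ≤ X := by linarith
  set c : ℝ → ℝ := fun x => projIcc (-X) X hXX x
  have hHc x : H (c x) = H x := apply_projIcc_eq_of_pdx_eq_zero hC3 hXX hCNH x
  have hzc x : z (c x) = z x := hinj x <| by
    rw [hz, ← hz (c x)]
    simp only [pdp, hHc]
  have hzC2 := contDiff_of_pdp_eq_zero hC3 hCVX hz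
  have hHz : Continuous fun x => H x (z x) := hC3.continuous.comp₂ continuous_id hzC2.continuous
  refine ⟨hzC2, fun x hx => deriv_eq_zero_of_apply_projIcc hXX hzc (le_abs_iff_notMem_Ioo.1 hx),
    exists_forall_le_of_apply_projIcc hXX hzC2.continuous hzc,
    exists_forall_ge_of_apply_projIcc hXX hzC2.continuous hzc,
    exists_forall_ge_of_apply_projIcc hXX hHz fun x => ?_⟩
  change H (c x) (z (c x)) = H x (z x)
  rw [hzc, hHc]
end
end

section
/- Let H satisfy (C3), (CNH) and (CVX), let z : ℝ → ℝ be the unique function with ∂ₚH(x,z(x)) = 0 for all x, and let K = max_{x∈ℝ} H(x,z(x)). Then there exist functions m, M : ℝ × (K, +∞) → ℝ uniquely characterized, for every x ∈ ℝ and c > K, by H(x, m(x,c)) = c with m(x,c) < z(x), and H(x, M(x,c)) = c with M(x,c) > z(x). Moreover: (i) m and M are of class C¹ on ℝ × (K,+∞); (ii) ∂ₓm(x,c) = 0 and ∂ₓM(x,c) = 0 whenever |x| > X and c > K; (iii) for every x, c ↦ m(x,c) is decreasing and c ↦ M(x,c) is increasing; (iv) for every x, m(x,c) → −∞ and M(x,c)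 → +∞ as c → +∞. -/
open Real Set MeasureTheory Filter Topology

noncomputable section

/-!
For fixed `x`, `p ↦ ∂ₚH(x,p)` is increasing, onto `ℝ` and vanishes at `z x`, so `H x` decreases
strictly on `(-∞, z x)`, increases strictly on `(z x, ∞)` and tends to `+∞` at both ends. Every
level `c > K ≥ H(x, z x)` is therefore attained exactly once on each side, and `m x`, `M x` are the
inverses (`invFunOn`) of the two branches; monotonicity in `c` and the limits are inherited from
`H x`. At a solution `∂ₚH ≠ 0`, so the implicit function theorem gives a local `C¹` solution; it
coincides with `m` (resp. `M`) nearby because the sign of `∂ₚH` tells the two branches apart. For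
`|x| > X`, `H y = H x` for all `y` near `x`, hence `z`, `m`, `M` are locally constant in `x`.
-/

open Function

section Profile

variable {f : ℝ → ℝ} {z : ℝ}

theorem strictAntiOn_Iic_of_deriv_eq_zero (hf : Differentiable ℝ f) (hf' : StrictMono (deriv f))
    (hz : deriv f z = 0) : StrictAntiOn f (Iic z) := by
  refine strictAntiOn_of_deriv_neg (convex_Iic z) hf.continuous.continuousOn fun p hp => ?_
  rw [interior_Iic] at hp
  exact hz ▸ hf' hp

theorem strictMonoOn_Ici_of_deriv_eq_zero (hf : Differentiable ℝ f) (hf' : StrictMono (deriv f))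
    (hz : deriv f z = 0) : StrictMonoOn f (Ici z) := by
  refine strictMonoOn_of_deriv_pos (convex_Ici z) hf.continuous.continuousOn fun p hp => ?_
  rw [interior_Ici] at hp
  exact hz ▸ hf' hp

theorem tendsto_atTop_atTop_of_surjective_deriv (hf : Differentiable ℝ f)
    (hf' : Monotone (deriv f)) (hsurj : Surjective (deriv f)) : Tendsto f atTop atTop := by
  obtain ⟨a, ha⟩ := hsurj 1
  have hslope : ∀ p ≥ a, 1 * (p - a) ≤ f p - f a :=
    fun p hp => (convex_Ici a).mul_sub_le_image_sub_of_le_deriv hf.continuous.continuousOn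
      hf.differentiableOn (fun q hq => ha.ge.trans (hf' (interior_subset hq)))
      a (mem_Ici.2 le_rfl) p hp hp
  refine tendsto_atTop_mono' _ ?_ (tendsto_atTop_add_const_right _ (f a - a) tendsto_id)
  filter_upwards [eventually_ge_atTop a] with p hp
  linarith [hslope p hp, id_eq p]

theorem tendsto_atBot_atTop_of_surjective_deriv (hf : Differentiable ℝ f)
    (hf' : Monotone (deriv f)) (hsurj : Surjective (deriv f)) : Tendsto f atBot atTop := by
  obtain ⟨b, hb⟩ := hsurj (-1)
  have hslope : ∀ p ≤ b, f b - f p ≤ -1 * (b - p) :=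
    fun p hp => (convex_Iic b).image_sub_le_mul_sub_of_deriv_le hf.continuous.continuousOn
      hf.differentiableOn (fun q hq => (hf' (mem_Iic.1 (interior_subset hq))).trans hb.le)
      p hp b (mem_Iic.2 le_rfl) hp
  refine tendsto_atTop_mono' _ ?_
    (tendsto_atTop_add_const_right _ (f b + b) tendsto_neg_atBot_atTop)
  filter_upwards [eventually_le_atBot b] with p hp
  linarith [hslope p hp]

theorem Ioi_subset_image_Iio_of_tendsto_atBot (hf : Continuous f)
    (htend : Tendsto f atBot atTop) : Ioi (f z) ⊆ f '' Iio z := by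
  intro c hc
  obtain ⟨b, hfb, hbz⟩ :=
    ((htend.eventually_ge_atTop c).and (eventually_le_atBot z)).exists
  obtain ⟨p, hp, rfl⟩ :=
    intermediate_value_Icc' hbz hf.continuousOn ⟨le_of_lt hc, hfb⟩
  exact ⟨p, hp.2.lt_of_ne (by rintro rfl; exact (mem_Ioi.1 hc).false), rfl⟩

theorem Ioi_subset_image_Ioi_of_tendsto_atTop (hf : Continuous f)
    (htend : Tendsto f atTop atTop) : Ioi (f z) ⊆ f '' Ioi z := by
  intro c hc
  obtain ⟨b, hfb, hzb⟩ :=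
    ((htend.eventually_ge_atTop c).and (eventually_ge_atTop z)).exists
  obtain ⟨p, hp, rfl⟩ :=
    intermediate_value_Icc hzb hf.continuousOn ⟨le_of_lt hc, hfb⟩
  exact ⟨p, hp.1.lt_of_ne (by rintro rfl; exact (mem_Ioi.1 hc).false), rfl⟩

theorem tendsto_invFunOn_Iio_atBot {a : ℝ} (hf : AntitoneOn f (Iio z))
    (hsurj : Ioi a ⊆ f '' Iio z) : Tendsto (invFunOn f (Iio z)) atTop atBot := by
  refine tendsto_atBot.2 fun B => ?_
  have hb : min B (z - 1) ∈ Iio z := (min_le_right _ _).trans_lt (sub_one_lt z)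
  filter_upwards [eventually_gt_atTop a, eventually_gt_atTop (f (min B (z - 1)))] with c hc hcb
  obtain ⟨hmem, hval⟩ := invFunOn_pos (hsurj hc)
  by_contra! hB
  have := hf hb hmem ((min_le_left _ _).trans hB.le)
  linarith

theorem tendsto_invFunOn_Ioi_atTop {a : ℝ} (hf : MonotoneOn f (Ioi z))
    (hsurj : Ioi a ⊆ f '' Ioi z) : Tendsto (invFunOn f (Ioi z)) atTop atTop := by
  refine tendsto_atTop.2 fun B => ?_
  have hb : max B (z + 1) ∈ Ioi z := (lt_add_one z).trans_le (le_max_right _ _)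
  filter_upwards [eventually_gt_atTop a, eventually_gt_atTop (f (max B (z + 1)))] with c hc hcb
  obtain ⟨hmem, hval⟩ := invFunOn_pos (hsurj hc)
  by_contra! hB
  have := hf hmem hb (hB.le.trans (le_max_left _ _))
  linarith

end Profile

theorem StrictAntiOn.strictAntiOn_invFunOn {α β : Type*} [LinearOrder α] [Nonempty α]
    [Preorder β] {f : α → β} {s : Set α} {t : Set β} (hf : StrictAntiOn f s)
    (ht : t ⊆ f '' s) : StrictAntiOn (invFunOn f s) t := fun c hc c' hc' hcc' => by
  obtain ⟨hmem, hval⟩ := invFunOn_pos (ht hc)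
  obtain ⟨hmem', hval'⟩ := invFunOn_pos (ht hc')
  exact (hf.lt_iff_gt hmem hmem').1 (by rwa [hval, hval'])

theorem StrictMonoOn.strictMonoOn_invFunOn {α β : Type*} [LinearOrder α] [Nonempty α]
    [Preorder β] {f : α → β} {s : Set α} {t : Set β} (hf : StrictMonoOn f s)
    (ht : t ⊆ f '' s) : StrictMonoOn (invFunOn f s) t := fun c hc c' hc' hcc' => by
  obtain ⟨hmem, hval⟩ := invFunOn_pos (ht hc)
  obtain ⟨hmem', hval'⟩ := invFunOn_pos (ht hc')
  exact (hf.lt_iff_lt hmem hmem').1 (by rwa [hval, hval'])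

theorem deriv_prodMk_right_eq_fderiv_apply {E F : Type*} [NormedAddCommGroup E]
    [NormedSpace ℝ E] [NormedAddCommGroup F] [NormedSpace ℝ F] {g : E × ℝ → F} {a : E} {t : ℝ}
    (hg : DifferentiableAt ℝ g (a, t)) :
    deriv (fun s => g (a, s)) t = fderiv ℝ g (a, t) (0, 1) :=
  (hg.hasFDerivAt.comp_hasDerivAt t ((hasDerivAt_const t a).prodMk (hasDerivAt_id t))).deriv

section Family

variable {H : ℝ → ℝ → ℝ}

theorem continuous_deriv_of_contDiff_uncurry (hH : ContDiff ℝ 1 (uncurry H)) :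
    Continuous fun v : ℝ × ℝ => deriv (H v.1) v.2 := by
  have hd := hH.differentiable one_ne_zero
  have : (fun v : ℝ × ℝ => deriv (H v.1) v.2) = fun v => fderiv ℝ (uncurry H) v (0, 1) :=
    funext fun v => deriv_prodMk_right_eq_fderiv_apply (g := uncurry H) (hd v)
  rw [this]
  exact (hH.continuous_fderiv one_ne_zero).clm_apply continuous_const

theorem exists_contDiffAt_implicit (hH : ContDiff ℝ 1 (uncurry H)) {x₀ p₀ c₀ : ℝ}
    (hc₀ : H x₀ p₀ = c₀) (hp₀ : deriv (H x₀) p₀ ≠ 0) :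
    ∃ ψ : ℝ × ℝ → ℝ, ContDiffAt ℝ 1 ψ (x₀, c₀) ∧ ψ (x₀, c₀) = p₀ ∧
      ∀ᶠ y in 𝓝 (x₀, c₀), H y.1 (ψ y) = y.2 := by
  set F : (ℝ × ℝ) × ℝ → ℝ := fun v => H v.1.1 v.2 - v.1.2 with hFdef
  have hF : ContDiff ℝ 1 F :=
    (hH.comp (contDiff_fst.fst.prodMk contDiff_snd)).sub contDiff_fst.snd
  have hinv : (fderiv ℝ F ((x₀, c₀), p₀) ∘L .inr ℝ (ℝ × ℝ) ℝ).IsInvertible := by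
    have hF' : deriv (fun s => F ((x₀, c₀), s)) p₀ = deriv (H x₀) p₀ := deriv_sub_const _
    rw [deriv_prodMk_right_eq_fderiv_apply (hF.differentiable one_ne_zero _)] at hF'
    refine ⟨ContinuousLinearEquiv.unitsEquivAut ℝ (Units.mk0 _ hp₀), ?_⟩
    ext
    simpa using hF'.symm
  have hcd := hF.contDiffAt (x := ((x₀, c₀), p₀))
  refine ⟨hcd.implicitFunction one_ne_zero hinv,
    hcd.contDiffAt_implicitFunction one_ne_zero hinv,
    hcd.implicitFunction_apply_self one_ne_zero hinv, ?_⟩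
  filter_upwards [hcd.eventually_apply_implicitFunction one_ne_zero hinv] with y hy
  simpa only [hFdef, hc₀, sub_self, sub_eq_zero] using hy

theorem differentiable_apply_of_contDiff_uncurry (hH : ContDiff ℝ 1 (uncurry H)) (x : ℝ) :
    Differentiable ℝ (H x) :=
  (hH.comp (contDiff_prodMk_right x)).differentiable one_ne_zero

theorem differentiable_apply_left_of_contDiff_uncurry (hH : ContDiff ℝ 1 (uncurry H))
    (p : ℝ) : Differentiable ℝ fun x => H x p :=
  (hH.comp (contDiff_prodMk_left p)).differentiable one_ne_zero

theorem contDiffAt_of_eventually_unique (hH : ContDiff ℝ 1 (uncurry H)) {g : ℝ × ℝ → ℝ}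
    {x₀ c₀ : ℝ} {s : Set ℝ} (hs : IsOpen s) (hs0 : (0 : ℝ) ∉ s)
    (hg₀ : H x₀ (g (x₀, c₀)) = c₀) (hgs : deriv (H x₀) (g (x₀, c₀)) ∈ s)
    (huniq : ∀ᶠ y in 𝓝 (x₀, c₀), ∀ p, H y.1 p = y.2 → deriv (H y.1) p ∈ s → p = g y) :
    ContDiffAt ℝ 1 g (x₀, c₀) := by
  obtain ⟨ψ, hψ, hψ₀, hψeq⟩ :=
    exists_contDiffAt_implicit hH hg₀ fun h => hs0 (h ▸ hgs)
  have hψs : ∀ᶠ y in 𝓝 (x₀, c₀), deriv (H y.1) (ψ y) ∈ s :=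
    ((continuous_deriv_of_contDiff_uncurry hH).continuousAt.comp
      (continuousAt_fst.prodMk hψ.continuousAt)) (hs.mem_nhds (by simpa [hψ₀] using hgs))
  refine hψ.congr_of_eventuallyEq ?_
  filter_upwards [huniq, hψeq, hψs] with y hy hψy hψsy
  exact (hy _ hψy hψsy).symm

theorem contDiffOn_invFunOn (hH : ContDiff ℝ 1 (uncurry H)) {t : ℝ → Set ℝ} {s : Set ℝ}
    (hs : IsOpen s) (hs0 : (0 : ℝ) ∉ s) (hts : ∀ x p, deriv (H x) p ∈ s ↔ p ∈ t x)
    (hinj : ∀ x, InjOn (H x) (t x)) {U : Set (ℝ × ℝ)}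
    (hU : ∀ y ∈ U, y.2 ∈ H y.1 '' t y.1) :
    ContDiffOn ℝ 1 (fun y : ℝ × ℝ => invFunOn (H y.1) (t y.1) y.2) U := by
  rintro ⟨x₀, c₀⟩ hy₀
  obtain ⟨hmem, hval⟩ := invFunOn_pos (hU _ hy₀)
  refine (contDiffAt_of_eventually_unique hH hs hs0 hval ((hts _ _).2 hmem)
    (Eventually.of_forall fun y p hp hps => ?_)).contDiffWithinAt
  rw [← hp]
  exact ((hinj y.1).leftInvOn_invFunOn ((hts _ _).1 hps)).symm

theorem eventually_eq_of_lt_abs {X x : ℝ} (hH : ∀ p, Differentiable ℝ fun x => H x p)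
    (hflat : ∀ x p, X ≤ |x| → pdx H x p = 0) (hx : X < |x|) : ∀ᶠ y in 𝓝 x, H y = H x := by
  have hball : ∀ y ∈ Metric.ball x (|x| - X), X ≤ |y| := fun y hy => by
    rw [Metric.mem_ball, Real.dist_eq] at hy
    linarith [abs_sub_abs_le_abs_sub x y, abs_sub_comm x y]
  filter_upwards [Metric.ball_mem_nhds x (sub_pos.2 hx)] with y hy
  funext p
  exact Metric.isOpen_ball.is_const_of_deriv_eq_zero (convex_ball x _).isPreconnected
    (hH p).differentiableOn (fun t ht => hflat t p (hball t ht)) hy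
    (Metric.mem_ball_self (sub_pos.2 hx))

theorem deriv_apply_eq_zero_of_lt_abs {X : ℝ} {z : ℝ → ℝ}
    (hH : ∀ p, Differentiable ℝ fun x => H x p) (hflat : ∀ x p, X ≤ |x| → pdx H x p = 0)
    (hinj : ∀ x, Injective (deriv (H x))) (hz : ∀ x, deriv (H x) (z x) = 0)
    (Φ : (ℝ → ℝ) → ℝ → ℝ) {x : ℝ} (hx : X < |x|) : deriv (fun y => Φ (H y) (z y)) x = 0 := by
  refine ((hasDerivAt_const x (Φ (H x) (z x))).congr_of_eventuallyEq ?_).deriv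
  filter_upwards [eventually_eq_of_lt_abs hH hflat hx] with y hy
  have hzy : z y = z x := hinj x (by rw [← hy, hz, hy, hz])
  rw [hy, hzy]

end Family

theorem stmt_3_general (H : ℝ → ℝ → ℝ) (hC3 : CondC3 H) (X : ℝ)
    (hCNH : ∀ x p : ℝ, X ≤ |x| → pdx H x p = 0) (hCVX : CondCVX H)
    (z : ℝ → ℝ) (hz : ∀ x : ℝ, pdp H x (z x) = 0)
    (K : ℝ) (hK : IsGreatest (Set.range fun x => H x (z x)) K) :
    ∃ m M : ℝ → ℝ → ℝ,
      (∀ x c : ℝ, K < c →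
        H x (m x c) = c ∧ m x c < z x ∧ H x (M x c) = c ∧ z x < M x c) ∧
      (∀ m' M' : ℝ → ℝ → ℝ,
        (∀ x c : ℝ, K < c →
          H x (m' x c) = c ∧ m' x c < z x ∧ H x (M' x c) = c ∧ z x < M' x c) →
        ∀ x c : ℝ, K < c → m' x c = m x c ∧ M' x c = M x c) ∧
      ContDiffOn ℝ 1 (fun y : ℝ × ℝ => m y.1 y.2) (Set.univ ×ˢ Set.Ioi K) ∧
      ContDiffOn ℝ 1 (fun y : ℝ × ℝ => M y.1 y.2) (Set.univ ×ˢ Set.Ioi K) ∧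
      (∀ x c : ℝ, X < |x| → K < c →
        deriv (fun y => m y c) x = 0 ∧ deriv (fun y => M y c) x = 0) ∧
      (∀ x : ℝ, StrictAntiOn (m x) (Set.Ioi K) ∧ StrictMonoOn (M x) (Set.Ioi K)) ∧
      (∀ x : ℝ, Tendsto (m x) atTop atBot ∧ Tendsto (M x) atTop atTop) := by
  have hH : ContDiff ℝ 1 (uncurry H) := ContDiff.of_le hC3 (by norm_num)
  have hd := differentiable_apply_of_contDiff_uncurry hH
  have hmono : ∀ x, StrictMono (deriv (H x)) := fun x => (hCVX x).1
  have hsurj : ∀ x, Surjective (deriv (H x)) := fun x => (hCVX x).2.1.2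
  have hz' : ∀ x, deriv (H x) (z x) = 0 := hz
  have hKz : ∀ x, Ioi K ⊆ Ioi (H x (z x)) := fun x => Ioi_subset_Ioi (hK.2 ⟨x, rfl⟩)
  have hanti : ∀ x, StrictAntiOn (H x) (Iio (z x)) := fun x =>
    (strictAntiOn_Iic_of_deriv_eq_zero (hd x) (hmono x) (hz' x)).mono Iio_subset_Iic_self
  have hmon : ∀ x, StrictMonoOn (H x) (Ioi (z x)) := fun x =>
    (strictMonoOn_Ici_of_deriv_eq_zero (hd x) (hmono x) (hz' x)).mono Ioi_subset_Ici_self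
  have hlow : ∀ x, Ioi K ⊆ H x '' Iio (z x) := fun x => (hKz x).trans <|
    Ioi_subset_image_Iio_of_tendsto_atBot (hd x).continuous
      (tendsto_atBot_atTop_of_surjective_deriv (hd x) (hmono x).monotone (hsurj x))
  have hup : ∀ x, Ioi K ⊆ H x '' Ioi (z x) := fun x => (hKz x).trans <|
    Ioi_subset_image_Ioi_of_tendsto_atTop (hd x).continuous
      (tendsto_atTop_atTop_of_surjective_deriv (hd x) (hmono x).monotone (hsurj x))
  have hneg : ∀ x p, deriv (H x) p ∈ Iio 0 ↔ p ∈ Iio (z x) := fun x p => by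
    rw [mem_Iio, mem_Iio, ← hz' x, (hmono x).lt_iff_lt]
  have hpos : ∀ x p, deriv (H x) p ∈ Ioi 0 ↔ p ∈ Ioi (z x) := fun x p => by
    rw [mem_Ioi, mem_Ioi, ← hz' x, (hmono x).lt_iff_lt]
  have hconst := deriv_apply_eq_zero_of_lt_abs (differentiable_apply_left_of_contDiff_uncurry hH)
    hCNH (fun x => (hmono x).injective) hz'
  refine ⟨fun x => invFunOn (H x) (Iio (z x)), fun x => invFunOn (H x) (Ioi (z x)),
    fun x c hc => ?_, fun m' M' h x c hc => ?_,
    contDiffOn_invFunOn hH isOpen_Iio self_notMem_Iio hneg (fun x => (hanti x).injOn)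
      fun y hy => hlow y.1 hy.2,
    contDiffOn_invFunOn hH isOpen_Ioi self_notMem_Ioi hpos (fun x => (hmon x).injOn)
      fun y hy => hup y.1 hy.2,
    fun x c hx _ => ⟨hconst (fun f w => invFunOn f (Iio w) c) hx,
      hconst (fun f w => invFunOn f (Ioi w) c) hx⟩,
    fun x => ⟨(hanti x).strictAntiOn_invFunOn (hlow x), (hmon x).strictMonoOn_invFunOn (hup x)⟩,
    fun x => ⟨tendsto_invFunOn_Iio_atBot (hanti x).antitoneOn (hlow x),
      tendsto_invFunOn_Ioi_atTop (hmon x).monotoneOn (hup x)⟩⟩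
  · obtain ⟨hm, hHm⟩ := invFunOn_pos (hlow x hc)
    obtain ⟨hM, hHM⟩ := invFunOn_pos (hup x hc)
    exact ⟨hHm, hm, hHM, hM⟩
  · obtain ⟨hHm, hm, hHM, hM⟩ := h x c hc
    exact ⟨by rw [← (hanti x).injOn.leftInvOn_invFunOn hm, hHm],
      by rw [← (hmon x).injOn.leftInvOn_invFunOn hM, hHM]⟩

/-- Lemma: existence, uniqueness and properties of the lower/upper level-set functions
`m, M : ℝ × (K, +∞) → ℝ` with `H(x, m(x,c)) = c`, `m(x,c) < z(x)` and
`H(x, M(x,c)) = c`, `M(x,c) > z(x)`. -/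
theorem stmt_3 (H : ℝ → ℝ → ℝ) (hC3 : CondC3 H) (X : ℝ) (hX : 0 < X)
    (hCNH : ∀ x p : ℝ, X ≤ |x| → pdx H x p = 0) (hCVX : CondCVX H)
    (z : ℝ → ℝ) (hz : ∀ x : ℝ, pdp H x (z x) = 0)
    (K : ℝ) (hK : IsGreatest (Set.range fun x => H x (z x)) K) :
    ∃ m M : ℝ → ℝ → ℝ,
      (∀ x c : ℝ, K < c →
        H x (m x c) = c ∧ m x c < z x ∧ H x (M x c) = c ∧ z x < M x c) ∧
      (∀ m' M' : ℝ → ℝ → ℝ,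
        (∀ x c : ℝ, K < c →
          H x (m' x c) = c ∧ m' x c < z x ∧ H x (M' x c) = c ∧ z x < M' x c) →
        ∀ x c : ℝ, K < c → m' x c = m x c ∧ M' x c = M x c) ∧
      ContDiffOn ℝ 1 (fun y : ℝ × ℝ => m y.1 y.2) (Set.univ ×ˢ Set.Ioi K) ∧
      ContDiffOn ℝ 1 (fun y : ℝ × ℝ => M y.1 y.2) (Set.univ ×ˢ Set.Ioi K) ∧
      (∀ x c : ℝ, X < |x| → K < c →
        deriv (fun y => m y c) x = 0 ∧ deriv (fun y => M y c) x = 0) ∧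
      (∀ x : ℝ, StrictAntiOn (m x) (Set.Ioi K) ∧ StrictMonoOn (M x) (Set.Ioi K)) ∧
      (∀ x : ℝ, Tendsto (m x) atTop atBot ∧ Tendsto (M x) atTop atTop) :=
  stmt_3_general H hC3 X hCNH hCVX z hz K hK
end
end

section
/- Let H satisfy (C3), (CNH) and (CVX). Fix T > 0 and W : ℝ → ℝ locally Lipschitz, and define U₀*(x) = sup{ W(q(T)) − ∫₀ᵀ L(q(s), q̇(s)) ds : q ∈ 𝓡_T, q(0) = x }. Then for every U₀ ∈ I_T^{HJ}(W) (i.e. every locally Lipschitz initial datum whose viscosity solution reaches W at time T) and every x ∈ ℝ, U₀(x) ≥ U₀*(x). -/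
open Real Set MeasureTheory Filter Topology

noncomputable section

/-- The Legendre transform `L(x,v) = sup_p (p v − H(x,p))` of `H` in its second variable. -/
def Leg (H : ℝ → ℝ → ℝ) (x v : ℝ) : ℝ := ⨆ p : ℝ, (p * v - H x p)

/-- `(q,p)` is a (global) solution of the Hamiltonian system (HS):
`q̇ = ∂ₚH(q,p)`, `ṗ = −∂ₓH(q,p)`. -/
def SolvesHS (H : ℝ → ℝ → ℝ) (q p : ℝ → ℝ) : Prop :=
  ∀ t : ℝ, HasDerivAt q (pdp H (q t) (p t)) t ∧ HasDerivAt p (-(pdx H (q t) (p t))) t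

/-- The action `∫₀ᵀ L(q(s), q̇(s)) ds` of a curve `q` on `[0,T]`. -/
def rayCost (H : ℝ → ℝ → ℝ) (T : ℝ) (q : ℝ → ℝ) : ℝ :=
  ∫ s in (0:ℝ)..T, Leg H (q s) (deriv q s)

/-- `U₀*(x) = sup { W(q(T)) − ∫₀ᵀ L(q,q̇) : q a Hamiltonian ray with q(0) = x }`. -/
def UStar (H : ℝ → ℝ → ℝ) (T : ℝ) (W : ℝ → ℝ) (x : ℝ) : ℝ :=
  sSup {y : ℝ | ∃ q p : ℝ → ℝ, SolvesHS H q p ∧ q 0 = x ∧ y = W (q T) - rayCost H T q}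

/-- Crandall–Lions viscosity solution of `∂ₜU + H(x, ∂ₓU) = 0` on `(0,T) × ℝ`,
tested with `C¹` functions via local maxima/minima of `U − φ`. -/
def IsViscSol (H : ℝ → ℝ → ℝ) (T : ℝ) (U : ℝ × ℝ → ℝ) : Prop :=
  (∀ φ : ℝ × ℝ → ℝ, ContDiff ℝ 1 φ → ∀ t₀ x₀ : ℝ, t₀ ∈ Set.Ioo 0 T →
      IsLocalMax (fun z => U z - φ z) (t₀, x₀) →
      deriv (fun t => φ (t, x₀)) t₀ + H x₀ (deriv (fun x => φ (t₀, x)) x₀) ≤ 0) ∧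
  (∀ φ : ℝ × ℝ → ℝ, ContDiff ℝ 1 φ → ∀ t₀ x₀ : ℝ, t₀ ∈ Set.Ioo 0 T →
      IsLocalMin (fun z => U z - φ z) (t₀, x₀) →
      0 ≤ deriv (fun t => φ (t, x₀)) t₀ + H x₀ (deriv (fun x => φ (t₀, x)) x₀))

/-- The inverse design `I_T^{HJ}(W)`: locally Lipschitz initial data `U₀` such that some
locally Lipschitz viscosity solution of (HJ) starts at `U₀` and reaches `W` at time `T`. -/
def InvDesignHJ (H : ℝ → ℝ → ℝ) (T : ℝ) (W : ℝ → ℝ) : Set (ℝ → ℝ) :=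
  {U₀ | LocallyLipschitz U₀ ∧ ∃ U : ℝ × ℝ → ℝ, LocallyLipschitz U ∧ IsViscSol H T U ∧
    (∀ x, U (0, x) = U₀ x) ∧ (∀ x, U (T, x) = W x)}

/-!
Along a Hamiltonian ray `(q, p)` the velocity is `q̇ = ∂ₚH(q, p)`, so the Lagrangian is
`L(q, q̇) = p q̇ - H(q, p)`. For a Lipschitz viscosity subsolution `U`, the function
`t ↦ U(t, q t)` is a viscosity subsolution of `w' ≤ L(q, q̇)`: at a maximum of
`U - ψ(t) - |x - q t|² / 2ε - (t - t₀)²` the subsolution inequality holds with momentum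
`(x - q t) / ε`, which the Lipschitz bound keeps of size `O(1)`, and convexity of `H` in `p`
compares it with `p`. Comparison in one variable then gives `W(q T) - U₀(q 0) ≤ ∫₀ᵀ L(q, q̇)`,
i.e. every candidate value in the definition of `U₀*(x)` is at most `U₀(x)`.

The supremum `U₀*(x)` is a `sSup`, which is `0` on the empty set, so one also needs a ray
starting at `x`. The flow of `(∂ₚH, -∂ₓH)` from `(x, 0)` conserves `H`, and by (CNH) and (CVX)
`H(x, p) → ∞` as `|p| → ∞` uniformly in `x`; hence `p` stays in a compact set and the flow is
global.
-/

open scoped NNReal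

theorem add_mul_le_of_hasDerivAt_of_monotone {f f' : ℝ → ℝ} (hf : ∀ x, HasDerivAt f (f' x) x)
    (hf' : Monotone f') (a b : ℝ) : f a + (b - a) * f' a ≤ f b := by
  have hconv : ConvexOn ℝ univ f := by
    refine Monotone.convexOn_univ_of_deriv (fun x => (hf x).differentiableAt) ?_
    rwa [show deriv f = f' from funext fun x => (hf x).deriv]
  rcases lt_trichotomy a b with hab | rfl | hab
  · have := hconv.le_slope_of_hasDerivAt (mem_univ a) (mem_univ b) hab (hf a)
    rw [slope_def_field, le_div_iff₀ (sub_pos.2 hab)] at this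
    linarith
  · simp
  · have := hconv.slope_le_of_hasDerivAt (mem_univ b) (mem_univ a) hab (hf a)
    rw [slope_def_field, div_le_iff₀ (sub_pos.2 hab)] at this
    linarith

theorem apply_projIcc_eq_of_hasDerivAt_zero {f : ℝ → ℝ} {a b : ℝ} (hab : a ≤ b)
    (hf : ∀ y ∉ Ioo a b, HasDerivAt f 0 y) (y : ℝ) : f (projIcc a b hab y) = f y := by
  have hconst {c d : ℝ} (hcd : c ≤ d) (h : ∀ z ∈ Icc c d, z ∉ Ioo a b) : f d = f c :=
    constant_of_has_deriv_right_zero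
      (fun z hz => (hf z (h z hz)).continuousAt.continuousWithinAt)
      (fun z hz => (hf z (h z (Ico_subset_Icc_self hz))).hasDerivWithinAt) d (right_mem_Icc.2 hcd)
  rcases lt_or_ge y a with hya | hay
  · rw [projIcc_of_le_left hab hya.le]
    exact hconst hya.le fun z hz h => hz.2.not_gt h.1
  rcases le_or_gt y b with hyb | hby
  · rw [projIcc_of_mem hab ⟨hay, hyb⟩]
  · rw [projIcc_of_right_le hab hby.le]
    exact (hconst hby.le fun z hz h => hz.1.not_gt h.2).symm

theorem eq_of_hasDerivAt_zero_of_preimage_subset {e : ℝ → ℝ} {O : Set ℝ} {c t₀ : ℝ}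
    (he : Continuous e) (hO : IsOpen O) (hder : ∀ t ∈ O, HasDerivAt e 0 t)
    (hsub : e ⁻¹' {c} ⊆ O) (h₀ : e t₀ = c) (t : ℝ) : e t = c := by
  have hopen : IsOpen (e ⁻¹' {c}) := by
    have := hO.isOpen_inter_preimage_of_deriv_eq_zero
      (fun t ht => (hder t ht).differentiableAt.differentiableWithinAt)
      (fun t ht => (hder t ht).deriv) {c}
    rwa [inter_eq_right.2 hsub] at this
  have hclopen : IsClopen (e ⁻¹' {c}) := ⟨isClosed_singleton.preimage he, hopen⟩
  change t ∈ e ⁻¹' {c}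
  rw [hclopen.eq_univ ⟨t₀, h₀⟩]
  trivial

theorem exists_forall_hasDerivAt_of_lipschitzWith_of_norm_le {E : Type*} [NormedAddCommGroup E]
    [NormedSpace ℝ E] [CompleteSpace E] {v : E → E} {K C : ℝ≥0} (hv : LipschitzWith K v)
    (hC : ∀ x, ‖v x‖ ≤ C) (x₀ : E) : ∃ γ : ℝ → E, γ 0 = x₀ ∧ ∀ t, HasDerivAt γ (v (γ t)) t := by
  have hPL (n : ℕ) : IsPicardLindelof (fun _ => v) (tmin := -(n + 1 : ℝ)) (tmax := n + 1)
      ⟨0, by constructor <;> linarith [n.cast_nonneg (α := ℝ)]⟩ x₀ (C * (n + 1)) 0 C K :=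
    { lipschitzOnWith := fun _ _ => hv.lipschitzOnWith
      continuousOn := fun _ _ => continuousOn_const
      norm_le := fun _ _ x _ => hC x
      mul_max_le := by simp }
  choose f hf0 hf using fun n => (hPL n).exists_eq_forall_mem_Icc_hasDerivWithinAt₀
  have hf' (n : ℕ) : ∀ t ∈ Ioo (-(n + 1 : ℝ)) (n + 1), HasDerivAt (f n) (v (f n t)) t :=
    fun t ht => (hf n t (Ioo_subset_Icc_self ht)).hasDerivAt (Icc_mem_nhds ht.1 ht.2)
  have hagree (m n : ℕ) (t : ℝ) (hm : |t| < m + 1) (hn : |t| < n + 1) : f m t = f n t := by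
    have hsub (k : ℕ) (hk : min m n ≤ k) :
        Ioo (-(min m n + 1 : ℝ)) (min m n + 1) ⊆ Ioo (-(k + 1 : ℝ)) (k + 1) := by
      have : ((min m n : ℕ) : ℝ) ≤ k := by exact_mod_cast hk
      exact Ioo_subset_Ioo (by linarith) (by linarith)
    refine ODE_solution_unique_of_mem_Ioo (v := fun _ => v) (s := fun _ => univ) (K := K)
      (fun _ _ => hv.lipschitzOnWith) (t₀ := 0)
      ⟨by linarith [(min m n).cast_nonneg (α := ℝ)], by positivity⟩
      (fun s hs => ⟨hf' m s (hsub m (min_le_left _ _) hs), mem_univ _⟩)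
      (fun s hs => ⟨hf' n s (hsub n (min_le_right _ _) hs), mem_univ _⟩)
      ((hf0 m).trans (hf0 n).symm) ?_
    rw [mem_Ioo, ← abs_lt]
    rcases min_choice m n with h | h <;> simpa [h]
  have hceil (t : ℝ) : |t| < ⌈|t|⌉₊ + 1 := (Nat.le_ceil _).trans_lt (lt_add_one _)
  refine ⟨fun t => f ⌈|t|⌉₊ t, by simpa using hf0 0, fun t => ?_⟩
  set m := ⌈|t|⌉₊
  have heq : (fun s => f ⌈|s|⌉₊ s) =ᶠ[𝓝 t] f m := by
    filter_upwards [(isOpen_lt continuous_abs continuous_const).mem_nhds (hceil t)] with s hs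
    exact hagree _ m s (hceil s) hs
  rw [heq.hasDerivAt_iff]
  exact hf' m t (abs_lt.1 (hceil t))

theorem le_of_viscosity_deriv_nonpos {w : ℝ → ℝ} {a b s t : ℝ} (hw : Continuous w)
    (h : ∀ t ∈ Ioo a b, ∀ ψ : ℝ → ℝ, ContDiff ℝ 1 ψ →
      IsLocalMax (fun τ => w τ - ψ τ) t → deriv ψ t ≤ 0)
    (has : a ≤ s) (hst : s < t) (htb : t < b) : w t ≤ w s := by
  by_contra! hlt
  obtain ⟨r, htr, hrb⟩ := exists_between htb
  set ε := (w t - w s) / (2 * (t - s))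
  have hε : 0 < ε := div_pos (by linarith) (by linarith)
  have hgr : 0 < expNegInvGlue (r - t) := expNegInvGlue.pos_of_pos (by linarith)
  -- the barrier `M expNegInvGlue (τ - t)` vanishes left of `t` and pushes the maximum below `r`
  set M := (|w r - ε * r - (w t - ε * t)| + 1) / expNegInvGlue (r - t)
  have hM : 0 ≤ M := by positivity
  set ψ : ℝ → ℝ := fun τ => ε * τ + M * expNegInvGlue (τ - t)
  have hψ : ContDiff ℝ 1 ψ :=
    (contDiff_const.mul contDiff_id).add
      (contDiff_const.mul (expNegInvGlue.contDiff.comp (contDiff_id.sub contDiff_const)))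
  obtain ⟨c, hc, hcmax⟩ := isCompact_Icc.exists_isMaxOn (nonempty_Icc.2 (by linarith : s ≤ r))
    (hw.sub hψ.continuous).continuousOn
  have hΦs : w s - ψ s < w t - ψ t := by
    have : ε * (t - s) = (w t - w s) / 2 := by simp only [ε]; field_simp [(sub_pos.2 hst).ne']
    simp only [ψ, expNegInvGlue.zero_of_nonpos (by linarith : s - t ≤ 0), sub_self,
      expNegInvGlue.zero]
    linarith
  have hΦr : w r - ψ r < w t - ψ t := by
    have : M * expNegInvGlue (r - t) = |w r - ε * r - (w t - ε * t)| + 1 :=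
      div_mul_cancel₀ _ hgr.ne'
    simp only [ψ, sub_self, expNegInvGlue.zero]
    linarith [le_abs_self (w r - ε * r - (w t - ε * t))]
  have hct : w t - ψ t ≤ w c - ψ c := hcmax (show t ∈ Icc s r from ⟨hst.le, htr.le⟩)
  have hcIoo : c ∈ Ioo s r :=
    ⟨lt_of_le_of_ne hc.1 (by rintro rfl; linarith), lt_of_le_of_ne hc.2 (by rintro rfl; linarith)⟩
  have hderiv : deriv ψ c = ε + M * deriv expNegInvGlue (c - t) := by
    have hg : HasDerivAt (fun τ => expNegInvGlue (τ - t)) (deriv expNegInvGlue (c - t)) c :=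
      ((expNegInvGlue.contDiff.differentiable one_ne_zero) _).hasDerivAt.comp_sub_const c t
    have := ((hasDerivAt_id' c).const_mul ε).fun_add (hg.const_mul M)
    rw [mul_one] at this
    exact this.deriv
  have := h c ⟨has.trans_lt hcIoo.1, hcIoo.2.trans (by linarith)⟩ ψ hψ
    (hcmax.isLocalMax (Icc_mem_nhds hcIoo.1 hcIoo.2))
  nlinarith [expNegInvGlue.monotone.deriv_nonneg (x := c - t)]

theorem antitoneOn_of_viscosity_deriv_nonpos {w : ℝ → ℝ} {a b : ℝ} (hw : Continuous w)
    (h : ∀ t ∈ Ioo a b, ∀ ψ : ℝ → ℝ, ContDiff ℝ 1 ψ →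
      IsLocalMax (fun τ => w τ - ψ τ) t → deriv ψ t ≤ 0) :
    AntitoneOn w (Icc a b) := by
  intro s hs t ht hst
  rcases hst.eq_or_lt with rfl | hst
  · rfl
  rcases ht.2.eq_or_lt with rfl | htb
  · refine le_of_tendsto (hw.continuousWithinAt (s := Iio t)) ?_
    filter_upwards [Ioo_mem_nhdsLT hst] with τ hτ
    exact le_of_viscosity_deriv_nonpos hw h hs.1 hτ.1 hτ.2
  · exact le_of_viscosity_deriv_nonpos hw h hs.1 hst htb

theorem sub_le_integral_of_viscosity_deriv_le {v f : ℝ → ℝ} {a b : ℝ} (hab : a ≤ b)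
    (hv : Continuous v) (hf : Continuous f)
    (h : ∀ t ∈ Ioo a b, ∀ ψ : ℝ → ℝ, ContDiff ℝ 1 ψ →
      IsLocalMax (fun τ => v τ - ψ τ) t → deriv ψ t ≤ f t) :
    v b - v a ≤ ∫ s in a..b, f s := by
  set F : ℝ → ℝ := fun t => ∫ s in a..t, f s
  have hF (t : ℝ) : HasDerivAt F (f t) t := (hf.integral_hasStrictDerivAt a t).hasDerivAt
  have hFC : ContDiff ℝ 1 F := contDiff_one_iff_deriv.2
    ⟨fun t => (hF t).differentiableAt, by rwa [show deriv F = f from funext fun t => (hF t).deriv]⟩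
  have hanti := antitoneOn_of_viscosity_deriv_nonpos (hv.sub hFC.continuous)
    (a := a) (b := b) fun t ht ψ hψ hmax => by
      have := h t ht (fun τ => F τ + ψ τ) (hFC.add hψ) (by simpa [sub_sub] using hmax)
      rwa [((hF t).fun_add (hψ.differentiable one_ne_zero t).hasDerivAt).deriv,
        add_le_iff_nonpos_right] at this
  have := hanti (left_mem_Icc.2 hab) (right_mem_Icc.2 hab) hab
  simp only [Pi.sub_apply, F, intervalIntegral.integral_same, sub_zero] at this
  linarith

theorem abs_le_and_sq_le_of_sq_div_add_sq_le {K ε d s : ℝ} (hK : 0 ≤ K) (hε : 0 < ε)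
    (h : d ^ 2 / (2 * ε) + s ^ 2 ≤ K * |d|) : |d| ≤ 2 * K * ε ∧ s ^ 2 ≤ 2 * K ^ 2 * ε := by
  have hd : |d| ^ 2 ≤ 2 * ε * (K * |d|) := by
    rw [sq_abs, ← div_le_iff₀' (by positivity)]
    linarith [sq_nonneg s]
  have hdK : |d| ≤ 2 * K * ε := by
    rcases (abs_nonneg d).eq_or_lt with h0 | hpos
    · rw [← h0]
      positivity
    · nlinarith
  refine ⟨hdK, ?_⟩
  nlinarith [div_nonneg (sq_nonneg d) (by positivity : (0 : ℝ) ≤ 2 * ε),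
    mul_le_mul_of_nonneg_left hdK hK]

theorem tendsto_of_penalty_bounds {q : ℝ → ℝ} (hq : Continuous q) {z : ℝ → ℝ × ℝ} {K t₀ : ℝ}
    (hz : ∀ ε > 0, |(z ε).2 - q (z ε).1| ≤ 2 * K * ε ∧ ((z ε).1 - t₀) ^ 2 ≤ 2 * K ^ 2 * ε) :
    Tendsto z (𝓝[>] 0) (𝓝 (t₀, q t₀)) := by
  have hlin (c : ℝ) : Tendsto (fun ε : ℝ => c * ε) (𝓝[>] 0) (𝓝 0) := by
    simpa using ((continuous_const.mul continuous_id).tendsto (0 : ℝ)).mono_left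
      nhdsWithin_le_nhds (f := fun ε : ℝ => c * ε)
  have htime : Tendsto (fun ε => (z ε).1) (𝓝[>] 0) (𝓝 t₀) := by
    rw [tendsto_iff_norm_sub_tendsto_zero]
    refine squeeze_zero' (Eventually.of_forall fun _ => norm_nonneg _) ?_
      (by simpa using (hlin (2 * K ^ 2)).sqrt)
    filter_upwards [self_mem_nhdsWithin] with ε hε
    exact Real.abs_le_sqrt (hz ε hε).2
  have hgap : Tendsto (fun ε => (z ε).2 - q (z ε).1) (𝓝[>] 0) (𝓝 0) := by
    refine squeeze_zero_norm' ?_ (hlin (2 * K))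
    filter_upwards [self_mem_nhdsWithin] with ε hε
    simpa [mul_assoc] using (hz ε hε).1
  simpa using htime.prodMk_nhds (by simpa using hgap.add ((hq.tendsto t₀).comp htime))

/-- Test function of the doubling argument: it penalises distance of `x` from the curve `q`
and of `t` from `t₀`. -/
def penalizedTest (ψ q : ℝ → ℝ) (t₀ ε : ℝ) (z : ℝ × ℝ) : ℝ :=
  ψ z.1 + (z.2 - q z.1) ^ 2 / (2 * ε) + (z.1 - t₀) ^ 2

theorem contDiff_penalizedTest {ψ q : ℝ → ℝ} (hψ : ContDiff ℝ 1 ψ) (hq : ContDiff ℝ 1 q)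
    (t₀ ε : ℝ) : ContDiff ℝ 1 (penalizedTest ψ q t₀ ε) :=
  ((hψ.comp contDiff_fst).add
    (((contDiff_snd.sub (hq.comp contDiff_fst)).pow 2).div_const _)).add
    ((contDiff_fst.sub contDiff_const).pow 2)

theorem hasDerivAt_penalizedTest_snd (ψ q : ℝ → ℝ) (t₀ ε t x : ℝ) :
    HasDerivAt (fun y => penalizedTest ψ q t₀ ε (t, y)) ((x - q t) / ε) x := by
  have := (((hasDerivAt_id' x).sub_const (q t)).fun_pow 2 |>.div_const (2 * ε)).const_add (ψ t)
    |>.add_const ((t - t₀) ^ 2)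
  refine this.congr_deriv ?_
  field_simp
  ring

theorem hasDerivAt_penalizedTest_fst {ψ q : ℝ → ℝ} {ψ' v t : ℝ} (hψ : HasDerivAt ψ ψ' t)
    (hq : HasDerivAt q v t) (t₀ ε x : ℝ) :
    HasDerivAt (fun s => penalizedTest ψ q t₀ ε (s, x))
      (ψ' - (x - q t) / ε * v + 2 * (t - t₀)) t := by
  have := (hψ.fun_add (((hasDerivAt_const t x).fun_sub hq).fun_pow 2 |>.div_const (2 * ε))).fun_add
    (((hasDerivAt_id' t).sub_const t₀).fun_pow 2)
  refine this.congr_deriv ?_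
  field_simp
  ring

open Metric in
theorem exists_isLocalMax_sub_penalizedTest {U : ℝ × ℝ → ℝ} (hU : LocallyLipschitz U)
    {ψ q : ℝ → ℝ} (hψ : Continuous ψ) (hq : Continuous q) {t₀ : ℝ}
    (hmax : IsLocalMax (fun t => U (t, q t) - ψ t) t₀) :
    ∃ (K : ℝ) (z : ℝ → ℝ × ℝ), Tendsto z (𝓝[>] 0) (𝓝 (t₀, q t₀)) ∧
      ∀ᶠ ε in 𝓝[>] 0, IsLocalMax (fun w => U w - penalizedTest ψ q t₀ ε w) (z ε) ∧
        |(z ε).2 - q (z ε).1| ≤ 2 * K * ε := by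
  obtain ⟨K, s, hs, hlip⟩ := hU (t₀, q t₀)
  obtain ⟨ρ₀, hρ₀, hρ₀s⟩ := nhds_basis_closedBall.mem_iff.1 hs
  obtain ⟨ρ₁, hρ₁, hcurve⟩ := Metric.eventually_nhds_iff.1
    (((continuous_id.prodMk hq).continuousAt.eventually_mem (closedBall_mem_nhds _ hρ₀)).and hmax)
  set ρ := min ρ₀ (ρ₁ / 2)
  have hρ : 0 < ρ := lt_min hρ₀ (half_pos hρ₁)
  have hφ (ε : ℝ) : Continuous (penalizedTest ψ q t₀ ε) := by
    unfold penalizedTest; fun_prop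
  choose z hzB hzmax using fun ε => (isCompact_closedBall (t₀, q t₀) ρ).exists_isMaxOn
    (nonempty_closedBall.2 hρ.le) (hU.continuous.sub (hφ ε)).continuousOn
  have hbounds : ∀ ε > 0,
      |(z ε).2 - q (z ε).1| ≤ 2 * K * ε ∧ ((z ε).1 - t₀) ^ 2 ≤ 2 * K ^ 2 * ε := by
    intro ε hε
    have htime : dist (z ε).1 t₀ < ρ₁ := calc
      dist (z ε).1 t₀ ≤ dist (z ε) (t₀, q t₀) := by rw [Prod.dist_eq]; exact le_max_left _ _
      _ ≤ ρ₁ / 2 := (mem_closedBall.1 (hzB ε)).trans (min_le_right _ _)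
      _ < ρ₁ := half_lt_self hρ₁
    obtain ⟨hmem, hcmp⟩ := hcurve htime
    have hlipz : U (z ε) - U ((z ε).1, q (z ε).1) ≤ K * |(z ε).2 - q (z ε).1| := by
      have := hlip.dist_le_mul (z ε)
        (hρ₀s (closedBall_subset_closedBall (min_le_left _ _) (hzB ε))) _ (hρ₀s hmem)
      simp only [Prod.dist_eq, Real.dist_eq, sub_self, abs_zero, id] at this
      rw [max_eq_right (abs_nonneg _)] at this
      linarith [le_abs_self (U (z ε) - U ((z ε).1, q (z ε).1))]
    have hopt : U (t₀, q t₀) - penalizedTest ψ q t₀ ε (t₀, q t₀) ≤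
        U (z ε) - penalizedTest ψ q t₀ ε (z ε) := hzmax ε (mem_closedBall_self hρ.le)
    simp only [penalizedTest, sub_self] at hopt hcmp
    exact abs_le_and_sq_le_of_sq_div_add_sq_le K.2 hε (by
      norm_num at hopt; linarith)
  refine ⟨K, z, tendsto_of_penalty_bounds hq hbounds, ?_⟩
  filter_upwards [self_mem_nhdsWithin,
    (tendsto_of_penalty_bounds hq hbounds).eventually (isOpen_ball.mem_nhds (mem_ball_self hρ))]
    with ε hε hball
  exact ⟨(hzmax ε).isLocalMax (mem_of_superset (isOpen_ball.mem_nhds hball) ball_subset_closedBall),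
    (hbounds ε hε).1⟩

section Hamiltonian

variable {H : ℝ → ℝ → ℝ}

theorem hasFDerivAt_uncurry (hC3 : CondC3 H) (z : ℝ × ℝ) :
    HasFDerivAt (Function.uncurry H) (fderiv ℝ (Function.uncurry H) z) z :=
  (hC3.differentiable (by norm_num) z).hasFDerivAt

theorem pdp_eq_fderiv_s8 (hC3 : CondC3 H) (x u : ℝ) :
    pdp H x u = fderiv ℝ (Function.uncurry H) (x, u) (0, 1) :=
  ((hasFDerivAt_uncurry hC3 _).comp_hasDerivAt u
    ((hasDerivAt_const u x).prodMk (hasDerivAt_id u))).deriv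

theorem pdx_eq_fderiv (hC3 : CondC3 H) (x u : ℝ) :
    pdx H x u = fderiv ℝ (Function.uncurry H) (x, u) (1, 0) :=
  ((hasFDerivAt_uncurry hC3 _).comp_hasDerivAt x
    ((hasDerivAt_id x).prodMk (hasDerivAt_const x u))).deriv

theorem hasDerivAt_pdp (hC3 : CondC3 H) (x u : ℝ) : HasDerivAt (H x) (pdp H x u) u :=
  ((hC3.differentiable (by norm_num)).comp
    ((differentiable_const x).prodMk differentiable_id) u).hasDerivAt

theorem hasDerivAt_pdx (hC3 : CondC3 H) (x u : ℝ) : HasDerivAt (fun y => H y u) (pdx H x u) x :=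
  ((hC3.differentiable (by norm_num)).comp
    (differentiable_id.prodMk (differentiable_const u)) x).hasDerivAt

theorem contDiff_pdp (hC3 : CondC3 H) : ContDiff ℝ 2 fun z : ℝ × ℝ => pdp H z.1 z.2 := by
  simp_rw [pdp_eq_fderiv_s8 hC3]
  exact (hC3.fderiv_right (by norm_num)).clm_apply contDiff_const

theorem contDiff_pdx (hC3 : CondC3 H) : ContDiff ℝ 2 fun z : ℝ × ℝ => pdx H z.1 z.2 := by
  simp_rw [pdx_eq_fderiv hC3]
  exact (hC3.fderiv_right (by norm_num)).clm_apply contDiff_const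

@[fun_prop]
theorem Continuous.pdp (hC3 : CondC3 H) {α : Type*} [TopologicalSpace α] {f g : α → ℝ}
    (hf : Continuous f) (hg : Continuous g) : Continuous fun a => pdp H (f a) (g a) :=
  (contDiff_pdp hC3).continuous.comp (hf.prodMk hg)

theorem add_mul_pdp_le (hC3 : CondC3 H) (hCVX : CondCVX H) (x a b : ℝ) :
    H x a + (b - a) * pdp H x a ≤ H x b :=
  add_mul_le_of_hasDerivAt_of_monotone (hasDerivAt_pdp hC3 x) (hCVX x).1.monotone a b

theorem leg_pdp (hC3 : CondC3 H) (hCVX : CondCVX H) (x u : ℝ) :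
    Leg H x (pdp H x u) = u * pdp H x u - H x u := by
  have hle (r : ℝ) : r * pdp H x u - H x r ≤ u * pdp H x u - H x u := by
    nlinarith [add_mul_pdp_le hC3 hCVX x u r]
  exact le_antisymm (ciSup_le hle) (le_ciSup ⟨_, forall_mem_range.2 hle⟩ u)

def hamiltonianField (H : ℝ → ℝ → ℝ) (z : ℝ × ℝ) : ℝ × ℝ := (pdp H z.1 z.2, -pdx H z.1 z.2)

theorem contDiff_hamiltonianField (hC3 : CondC3 H) : ContDiff ℝ 2 (hamiltonianField H) :=
  (contDiff_pdp hC3).prodMk (contDiff_pdx hC3).neg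

theorem hasDerivAt_energy (hC3 : CondC3 H) {γ : ℝ → ℝ × ℝ} {t : ℝ}
    (hγ : HasDerivAt γ (hamiltonianField H (γ t)) t) :
    HasDerivAt (fun s => Function.uncurry H (γ s)) 0 t := by
  refine ((hasFDerivAt_uncurry hC3 (γ t)).comp_hasDerivAt t hγ).congr_deriv ?_
  have hsplit : hamiltonianField H (γ t) =
      pdp H (γ t).1 (γ t).2 • ((1 : ℝ), (0 : ℝ)) +
        (-pdx H (γ t).1 (γ t).2) • ((0 : ℝ), (1 : ℝ)) := by
    simp [hamiltonianField]
  rw [hsplit, map_add, map_smul, map_smul, ← pdx_eq_fderiv hC3, ← pdp_eq_fderiv_s8 hC3, smul_eq_mul,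
    smul_eq_mul]
  ring

section CompactNonHomogeneity

variable {X : ℝ} (hX : -X ≤ X) (hX0 : ∀ x p, X ≤ |x| → pdx H x p = 0)
include hX0

theorem H_projIcc (hC3 : CondC3 H) (x u : ℝ) : H (projIcc (-X) X hX x) u = H x u :=
  apply_projIcc_eq_of_hasDerivAt_zero hX (fun y hy => by
    simpa [hX0 y u (not_lt.1 fun h => hy (abs_lt.1 h))] using hasDerivAt_pdx hC3 y u) x

theorem hamiltonianField_projIcc (hC3 : CondC3 H) (z : ℝ × ℝ) :
    hamiltonianField H (projIcc (-X) X hX z.1, z.2) = hamiltonianField H z := by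
  have hpdp : pdp H (projIcc (-X) X hX z.1) z.2 = pdp H z.1 z.2 := by
    simp only [pdp, H_projIcc hX hX0 hC3]
  have hpdx : pdx H (projIcc (-X) X hX z.1) z.2 = pdx H z.1 z.2 := by
    rcases lt_or_ge |z.1| X with h | h
    · rw [projIcc_of_mem hX (abs_le.1 h.le)]
    · rw [hX0 _ _ h, hX0]
      rcases le_abs'.1 h with h' | h'
      · simp [projIcc_of_le_left hX h', abs_of_nonneg ((neg_le_self_iff).1 hX)]
      · simp [projIcc_of_right_le hX h', abs_of_nonneg ((neg_le_self_iff).1 hX)]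
  simp [hamiltonianField, hpdp, hpdx]

end CompactNonHomogeneity

theorem exists_nat_one_lt_pdp (hC3 : CondC3 H) (hCVX : CondCVX H) {K : Set ℝ} (hK : IsCompact K) :
    ∃ n : ℕ, ∀ a ∈ K, 1 < pdp H a n ∧ pdp H a (-n) < -1 := by
  have hcont (u : ℝ) : Continuous fun a => pdp H a u := continuous_id.pdp hC3 continuous_const
  exact hK.elim_directed_cover (fun n : ℕ => {a | 1 < pdp H a n ∧ pdp H a (-n) < -1})
    (fun n => (isOpen_lt continuous_const (hcont _)).inter (isOpen_lt (hcont _) continuous_const))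
    (fun a _ => by
      obtain ⟨up, hup⟩ := (hCVX a).2.1.2 2
      obtain ⟨um, hum⟩ := (hCVX a).2.1.2 (-2)
      obtain ⟨n, hn⟩ := exists_nat_ge (max up (-um))
      have hup' := (hCVX a).1.monotone (le_of_max_le_left hn)
      have hum' := (hCVX a).1.monotone (neg_le.1 (le_of_max_le_right hn))
      exact mem_iUnion.2 ⟨n, by rw [hup] at hup'; rw [hum] at hum'; constructor <;> linarith⟩)
    (Monotone.directed_le fun m n hmn a ⟨h₁, h₂⟩ => by
      have hmn' : (m : ℝ) ≤ n := by exact_mod_cast hmn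
      exact ⟨h₁.trans_le ((hCVX a).1.monotone hmn'),
        ((hCVX a).1.monotone (neg_le_neg hmn')).trans_lt h₂⟩)

theorem exists_pos_lt_H_of_le_abs (hC3 : CondC3 H) (hCNH : CondCNH H) (hCVX : CondCVX H)
    (E : ℝ) : ∃ P > 0, ∀ a b, P ≤ |b| → E < H a b := by
  obtain ⟨X, hX, hX0⟩ := hCNH
  have hXX : -X ≤ X := by linarith
  obtain ⟨n, hn⟩ := exists_nat_one_lt_pdp hC3 hCVX (isCompact_Icc (a := -X) (b := X))
  have hH : Continuous fun z : ℝ × ℝ => H z.1 z.2 := hC3.continuous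
  obtain ⟨m, hm⟩ : BddBelow ((fun a => min (H a n) (H a (-n))) '' Icc (-X) X) :=
    isCompact_Icc.bddBelow_image (by fun_prop)
  refine ⟨n + |E - m| + 1, by positivity, fun a b hb => ?_⟩
  rw [← H_projIcc hXX hX0 hC3]
  set a' := (projIcc (-X) X hXX a : ℝ)
  have ha' : a' ∈ Icc (-X) X := Subtype.mem _
  have hmin := hm (mem_image_of_mem _ ha')
  have hmin_pos : m ≤ H a' n := hmin.trans (min_le_left _ _)
  have hmin_neg : m ≤ H a' (-n) := hmin.trans (min_le_right _ _)
  rcases le_abs'.1 hb with hb | hb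
  · have := add_mul_pdp_le hC3 hCVX a' (-n) b
    have := mul_le_mul_of_nonpos_left (hn a' ha').2.le
      (by linarith [abs_nonneg (E - m)] : b - -n ≤ 0)
    linarith [le_abs_self (E - m)]
  · have := add_mul_pdp_le hC3 hCVX a' n b
    have := mul_le_mul_of_nonneg_left (hn a' ha').1.le
      (by linarith [abs_nonneg (E - m)] : 0 ≤ b - n)
    linarith [le_abs_self (E - m)]

theorem exists_solvesHS (hC3 : CondC3 H) (hCNH : CondCNH H) (hCVX : CondCVX H) (x : ℝ) :
    ∃ q p : ℝ → ℝ, SolvesHS H q p ∧ q 0 = x := by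
  obtain ⟨P, hP, hPH⟩ := exists_pos_lt_H_of_le_abs hC3 hCNH hCVX (H x 0)
  obtain ⟨X, hX, hX0⟩ := hCNH
  have hXX : -X ≤ X := by linarith
  have hPP : -P ≤ P := by linarith
  -- cut the field off outside the box `Q`, making it globally Lipschitz and bounded
  set Q := Icc (-X) X ×ˢ Icc (-P) P
  set clamp : ℝ × ℝ → ℝ × ℝ := fun z => (projIcc (-X) X hXX z.1, projIcc (-P) P hPP z.2)
  have hclampQ : MapsTo clamp univ Q := fun z _ => ⟨Subtype.mem _, Subtype.mem _⟩
  have hclamp : LipschitzWith 1 clamp := by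
    simpa using (((LipschitzWith.subtype_val _).comp (LipschitzWith.projIcc hXX)).comp
      LipschitzWith.prod_fst).prodMk
      (((LipschitzWith.subtype_val _).comp (LipschitzWith.projIcc hPP)).comp LipschitzWith.prod_snd)
  have hQ : IsCompact Q := isCompact_Icc.prod isCompact_Icc
  obtain ⟨K, hK⟩ := (contDiff_hamiltonianField hC3).contDiffOn.exists_lipschitzOnWith
    (by norm_num) ((convex_Icc _ _).prod (convex_Icc _ _)) hQ
  obtain ⟨C, hC⟩ := hQ.exists_bound_of_continuousOn
    (contDiff_hamiltonianField hC3).continuous.continuousOn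
  obtain ⟨γ, hγ0, hγ⟩ := exists_forall_hasDerivAt_of_lipschitzWith_of_norm_le
    (lipschitzOnWith_univ.1 (hK.comp hclamp.lipschitzOnWith hclampQ))
    (fun z => (hC _ (hclampQ (mem_univ z))).trans (Real.le_coe_toNNReal C)) (x, 0)
  have hfield (z : ℝ × ℝ) (hz : |z.2| ≤ P) :
      hamiltonianField H (clamp z) = hamiltonianField H z := by
    simpa [clamp, projIcc_of_mem hPP (abs_le.1 hz)] using hamiltonianField_projIcc hXX hX0 hC3 z
  have hγc : Continuous γ := continuous_iff_continuousAt.2 fun t => (hγ t).continuousAt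
  -- energy is conserved as long as `|p| < P`, and the energy level `H x 0` forces `|p| < P`
  have henergy := eq_of_hasDerivAt_zero_of_preimage_subset
    (O := {t | |(γ t).2| < P}) (t₀ := 0) (c := H x 0)
    (hC3.continuous.comp hγc) (isOpen_lt (continuous_snd.comp hγc).abs continuous_const)
    (fun t ht => hasDerivAt_energy hC3 (by rw [← hfield _ (le_of_lt ht)]; exact hγ t))
    (fun t ht => not_le.1 fun h => (hPH _ _ h).ne' ht) (by simp [hγ0])
  refine ⟨fun t => (γ t).1, fun t => (γ t).2, fun t => ?_, by simp [hγ0]⟩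
  have hbound : |(γ t).2| ≤ P := le_of_lt (not_le.1 fun h => (hPH _ _ h).ne' (henergy t))
  have h := hγ t
  rw [Function.comp_apply, hfield _ hbound] at h
  exact ⟨(ContinuousLinearMap.fst ℝ ℝ ℝ).hasFDerivAt.comp_hasDerivAt t h,
    (ContinuousLinearMap.snd ℝ ℝ ℝ).hasFDerivAt.comp_hasDerivAt t h⟩

/-- The subsolution half of `IsViscSol`. -/
def IsViscSubsol (H : ℝ → ℝ → ℝ) (T : ℝ) (U : ℝ × ℝ → ℝ) : Prop :=
  ∀ φ : ℝ × ℝ → ℝ, ContDiff ℝ 1 φ → ∀ t₀ x₀ : ℝ, t₀ ∈ Set.Ioo 0 T →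
    IsLocalMax (fun z => U z - φ z) (t₀, x₀) →
    deriv (fun t => φ (t, x₀)) t₀ + H x₀ (deriv (fun x => φ (t₀, x)) x₀) ≤ 0

theorem deriv_le_of_isLocalMax_sub_penalizedTest (hC3 : CondC3 H) (hCVX : CondCVX H) {T : ℝ}
    {U : ℝ × ℝ → ℝ} (hsub : IsViscSubsol H T U) {ψ q : ℝ → ℝ} (hψ : ContDiff ℝ 1 ψ)
    (hq : ContDiff ℝ 1 q) {t₀ ε t x u : ℝ} (hq' : HasDerivAt q (pdp H (q t) u) t)
    (ht : t ∈ Ioo 0 T) (hmax : IsLocalMax (fun z => U z - penalizedTest ψ q t₀ ε z) (t, x)) :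
    deriv ψ t ≤ (x - q t) / ε * (pdp H (q t) u - pdp H x u) + (u * pdp H x u - H x u)
      + 2 * (t₀ - t) := by
  have hvisc := hsub _ (contDiff_penalizedTest hψ hq t₀ ε) t x ht hmax
  rw [(hasDerivAt_penalizedTest_fst (hψ.differentiable one_ne_zero t).hasDerivAt hq' t₀ ε x).deriv,
    (hasDerivAt_penalizedTest_snd ψ q t₀ ε t x).deriv] at hvisc
  linarith [add_mul_pdp_le hC3 hCVX x u ((x - q t) / ε)]

theorem deriv_le_lagrangian_of_isLocalMax (hC3 : CondC3 H) (hCVX : CondCVX H) {T : ℝ}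
    {U : ℝ × ℝ → ℝ} (hU : LocallyLipschitz U) (hsub : IsViscSubsol H T U) {q p : ℝ → ℝ}
    (hq : ∀ t, HasDerivAt q (pdp H (q t) (p t)) t) (hp : Continuous p) {t₀ : ℝ}
    (ht₀ : t₀ ∈ Ioo 0 T) {ψ : ℝ → ℝ} (hψ : ContDiff ℝ 1 ψ)
    (hmax : IsLocalMax (fun t => U (t, q t) - ψ t) t₀) :
    deriv ψ t₀ ≤ p t₀ * pdp H (q t₀) (p t₀) - H (q t₀) (p t₀) := by
  have hqc : Continuous q := continuous_iff_continuousAt.2 fun t => (hq t).continuousAt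
  have hH : Continuous fun z : ℝ × ℝ => H z.1 z.2 := hC3.continuous
  have hqC : ContDiff ℝ 1 q := contDiff_one_iff_deriv.2 ⟨fun t => (hq t).differentiableAt, by
    rw [show deriv q = _ from funext fun t => (hq t).deriv]
    exact hqc.pdp hC3 hp⟩
  obtain ⟨K, z, hz, hev⟩ := exists_isLocalMax_sub_penalizedTest hU hψ.continuous hqc hmax
  set A : ℝ × ℝ → ℝ := fun w => 2 * K * |pdp H (q w.1) (p w.1) - pdp H w.2 (p w.1)|
    + (p w.1 * pdp H w.2 (p w.1) - H w.2 (p w.1)) + 2 * (t₀ - w.1)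
  have hA : Continuous A := by fun_prop (disch := assumption)
  have hlim : Tendsto (A ∘ z) (𝓝[>] 0)
      (𝓝 (p t₀ * pdp H (q t₀) (p t₀) - H (q t₀) (p t₀))) := by
    convert (hA.tendsto _).comp hz using 2
    simp [A]
  refine le_of_tendsto_of_tendsto
    (((contDiff_one_iff_deriv.1 hψ).2.tendsto t₀).comp ((continuous_fst.tendsto _).comp hz)) hlim ?_
  filter_upwards [hev, self_mem_nhdsWithin,
    hz.eventually ((continuous_fst.isOpen_preimage _ isOpen_Ioo).mem_nhds ht₀)]
    with ε ⟨hloc, hgap⟩ hε hT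
  have hstep := deriv_le_of_isLocalMax_sub_penalizedTest hC3 hCVX hsub hψ hqC (hq _) hT hloc
  have hr : |((z ε).2 - q (z ε).1) / ε| ≤ 2 * K := by
    rw [abs_div, abs_of_pos (mem_Ioi.1 hε), div_le_iff₀ (mem_Ioi.1 hε)]
    exact hgap
  have := (le_abs_self _).trans ((abs_mul _ _).trans_le (mul_le_mul_of_nonneg_right hr (abs_nonneg
    (pdp H (q (z ε).1) (p (z ε).1) - pdp H (z ε).2 (p (z ε).1)))))
  simp only [Function.comp_apply, A]
  linarith

theorem sub_le_integral_lagrangian (hC3 : CondC3 H) (hCVX : CondCVX H) {T : ℝ} (hT : 0 < T)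
    {U : ℝ × ℝ → ℝ} (hU : LocallyLipschitz U) (hsub : IsViscSubsol H T U) {q p : ℝ → ℝ}
    (hqp : SolvesHS H q p) :
    U (T, q T) - U (0, q 0) ≤ ∫ s in (0 : ℝ)..T, Leg H (q s) (deriv q s) := by
  have hqc : Continuous q := continuous_iff_continuousAt.2 fun t => (hqp t).1.continuousAt
  have hpc : Continuous p := continuous_iff_continuousAt.2 fun t => (hqp t).2.continuousAt
  have hL : (fun s => Leg H (q s) (deriv q s)) =
      fun s => p s * pdp H (q s) (p s) - H (q s) (p s) := by
    funext s
    rw [(hqp s).1.deriv, leg_pdp hC3 hCVX]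
  have hH : Continuous fun z : ℝ × ℝ => H z.1 z.2 := hC3.continuous
  rw [hL]
  exact sub_le_integral_of_viscosity_deriv_le hT.le (hU.continuous.comp (continuous_id.prodMk hqc))
    (by fun_prop (disch := assumption)) fun t ht ψ hψ hmax =>
      deriv_le_lagrangian_of_isLocalMax hC3 hCVX hU hsub (fun t => (hqp t).1) hpc ht hψ hmax

end Hamiltonian

theorem stmt_8_general (H : ℝ → ℝ → ℝ) (hC3 : CondC3 H) (hCNH : CondCNH H) (hCVX : CondCVX H)
    (T : ℝ) (hT : 0 < T) (W : ℝ → ℝ) :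
    ∀ U₀ ∈ InvDesignHJ H T W, ∀ x : ℝ, UStar H T W x ≤ U₀ x := by
  rintro U₀ ⟨-, U, hU, hvisc, hU0, hUT⟩ x
  obtain ⟨q₀, p₀, hqp₀, hq₀⟩ := exists_solvesHS hC3 hCNH hCVX x
  refine csSup_le ⟨_, q₀, p₀, hqp₀, hq₀, rfl⟩ ?_
  rintro _ ⟨q, p, hqp, rfl, rfl⟩
  have := sub_le_integral_lagrangian hC3 hCVX hT hU hvisc.1 hqp
  rw [hU0, hUT] at this
  unfold rayCost
  linarith

/-- Lemma: every initial datum in the inverse design `I_T^{HJ}(W)` dominates `U₀*`. -/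
theorem stmt_8 (H : ℝ → ℝ → ℝ) (hC3 : CondC3 H) (hCNH : CondCNH H) (hCVX : CondCVX H)
    (T : ℝ) (hT : 0 < T) (W : ℝ → ℝ) (hW : LocallyLipschitz W) :
    ∀ U₀ ∈ InvDesignHJ H T W, ∀ x : ℝ, UStar H T W x ≤ U₀ x :=
  stmt_8_general H hC3 hCNH hCVX T hT W
end
end
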